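/- arXiv:2411.14983 — 5 statements merged into one kernel-verified Lean document; each statement's English description precedes it below -/
import Mathlib

section
/- Let n, m be natural numbers with 1 ≤ m ≤ n, let a_1, …, a_n be real numbers, and for v ∈ {−1, +1} define λ(v) = (n / C(n,m)) · Σ_{S ⊆ {1,…,n}, |S| = m} ( v · m^{-1} Σ_{j ∈ S} a_j )_+ , where C(n,m) is the binomial coefficient and (t)_+ = max(t, 0). Then λ(v) − λ(−v) = v · Σ_{j=1}^{n} a_j. (This is the exactness identity showing that sub-sampling switching rates built from any additive decomposition of the potential gradient satisfy the skew-detailed-balance condition λ_i(x,v) − λ_i(x,F_i(v)) = v_i ∇_i U_n(x).) -/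
open Finset

/-- The Zig-Zag sub-sampling switching rate with batch size `m` built from the
reals `a 0, …, a (n-1)` and direction `v ∈ {−1, +1}`:
`λ(v) = (n / C(n,m)) Σ_{S ⊆ {0,…,n-1}, |S| = m} ( v · m⁻¹ Σ_{j ∈ S} a j )₊`. -/
noncomputable def subsamplingRate (n m : ℕ) (a : ℕ → ℝ) (v : ℝ) : ℝ :=
  (n : ℝ) / (n.choose m : ℝ) *
    ∑ S ∈ Finset.powersetCard m (Finset.range n),
      max (v * ((m : ℝ)⁻¹ * ∑ j ∈ S, a j)) 0

/-! Since `x₊ - (-x)₊ = x`, the positive parts cancel in `λ(v) - λ(-v)`, leaving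
`v` times the average of the batch means `m⁻¹ Σ_{j ∈ S} a j`. Each index lies in
`C(n-1, m-1)` of the batches, and `n C(n-1, m-1) = m C(n, m)`, so this average is
`n⁻¹ Σ_j a j`. -/

theorem Nat.mul_choose_sub_one {n k : ℕ} (hk : k ≠ 0) :
    n * (n - 1).choose (k - 1) = k * n.choose k := by
  obtain ⟨k, rfl⟩ := Nat.exists_eq_add_one_of_ne_zero hk
  cases n with
  | zero => simp
  | succ n => simpa [mul_comm] using Nat.add_one_mul_choose_eq n k

namespace Finset

variable {α β : Type*} [DecidableEq α] {s : Finset α} {m : ℕ}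

theorem card_filter_mem_powersetCard (hm : m ≠ 0) {j : α} (hj : j ∈ s) :
    #{S ∈ s.powersetCard m | j ∈ S} = (#s - 1).choose (m - 1) := by
  simpa only [singleton_subset_iff, card_singleton] using
    card_filter_powersetCard_subset {j} s m (singleton_subset_iff.2 hj)
      (by rw [card_singleton]; omega)

theorem sum_powersetCard_sum [AddCommMonoid β] (hm : m ≠ 0) (f : α → β) :
    ∑ S ∈ s.powersetCard m, ∑ j ∈ S, f j = (#s - 1).choose (m - 1) • ∑ j ∈ s, f j := by
  calc ∑ S ∈ s.powersetCard m, ∑ j ∈ S, f j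
      = ∑ j ∈ s, ∑ S ∈ s.powersetCard m with j ∈ S, f j :=
        sum_comm' fun S j => by
          simp only [mem_filter, mem_powersetCard]
          exact ⟨fun h => ⟨h, h.1.1 h.2⟩, And.left⟩
    _ = ∑ j ∈ s, (#s - 1).choose (m - 1) • f j :=
        sum_congr rfl fun j hj => by rw [sum_const, card_filter_mem_powersetCard hm hj]
    _ = (#s - 1).choose (m - 1) • ∑ j ∈ s, f j := (smul_sum ..).symm

end Finset

theorem subsamplingRate_sub_eq_general (n m : ℕ) (hm : 1 ≤ m) (hmn : m ≤ n)
    (a : ℕ → ℝ) (v : ℝ) :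
    subsamplingRate n m a v - subsamplingRate n m a (-v)
      = v * ∑ j ∈ Finset.range n, a j := by
  have hm0 : m ≠ 0 := by omega
  have hchoose : (n : ℝ) * (n - 1).choose (m - 1) = m * n.choose m := by
    exact_mod_cast Nat.mul_choose_sub_one hm0
  have hpos : (0 : ℝ) < n.choose m := by exact_mod_cast Nat.choose_pos hmn
  simp only [subsamplingRate, ← mul_sub, ← sum_sub_distrib, neg_mul,
    max_zero_sub_max_neg_zero_eq_self]
  rw [← mul_sum, ← mul_sum, sum_powersetCard_sum hm0, card_range, nsmul_eq_mul]
  field_simp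
  linear_combination (v * ∑ j ∈ range n, a j) * hchoose

/-- Exactness identity: `λ(v) − λ(−v) = v · Σ_j a_j`. -/
theorem subsamplingRate_sub_eq (n m : ℕ) (hm : 1 ≤ m) (hmn : m ≤ n)
    (a : ℕ → ℝ) (v : ℝ) (hv : v = 1 ∨ v = -1) :
    subsamplingRate n m a v - subsamplingRate n m a (-v)
      = v * ∑ j ∈ Finset.range n, a j :=
  subsamplingRate_sub_eq_general n m hm hmn a v
end

section
/- Let n ≥ 2 and 1 ≤ m ≤ n, let a_1, …, a_n be real numbers with mean ā = n^{-1} Σ_{j=1}^{n} a_j, and let v ∈ {−1, +1}. Then | (1 / C(n,m)) Σ_{S ⊆ {1,…,n}, |S| = m} ( v · m^{-1} Σ_{j ∈ S} a_j )_+ − ( v · ā )_+ | ≤ (1 / C(n,m)) Σ_{S, |S| = m} | m^{-1} Σ_{j ∈ S} a_j − ā | ≤ sqrt( ((n − m)/(n·m)) · (1/(n−1)) · Σ_{j=1}^{n} (a_j − ā)² ). In particular, the (normalized) sub-sampled switching rate differs from the canonical rate by at most the standard error of the SRSWOR mean estimator. -/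
/-!
For `|v| ≤ 1` the map `x ↦ max (v * x) 0` is `1`-Lipschitz, so averaging it over the subsamples
moves it by at most the mean absolute deviation of the subsample means; Cauchy–Schwarz bounds that
by the root of their mean squared deviation, which is the classical variance of the mean under
sampling without replacement. To compute it, centre the data so that `∑ j ∈ U, b j = 0`; then
`(∑ S b)² = -(∑ S b) * (∑ (U \ S) b)`, and an ordered pair `i ≠ j` has `i ∈ S`, `j ∉ S` for exactly
`C(n - 2, m - 1)` of the `m`-subsets `S`, whence `∑ S, (∑ S b)² = C(n - 2, m - 1) * ∑ j, b j ^ 2`.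
-/

open Finset
open scoped BigOperators

section

variable {ι : Type*}

theorem expect_abs_le_sqrt_expect_sq (s : Finset ι) (f : ι → ℝ) :
    𝔼 i ∈ s, |f i| ≤ √(𝔼 i ∈ s, f i ^ 2) := by
  refine (Real.le_sqrt (expect_nonneg fun i _ => abs_nonneg _)
    (expect_nonneg fun i _ => sq_nonneg _)).2 ?_
  simpa only [expect_eq_sum_div_card, sq_abs] using
    sum_div_card_sq_le_sum_sq_div_card (s := s) (f := fun i => |f i|)

theorem LipschitzWith.abs_expect_comp_sub_le {g : ℝ → ℝ} (hg : LipschitzWith 1 g)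
    {s : Finset ι} (hs : s.Nonempty) (f : ι → ℝ) (c : ℝ) :
    |𝔼 i ∈ s, g (f i) - g c| ≤ 𝔼 i ∈ s, |f i - c| := by
  calc |𝔼 i ∈ s, g (f i) - g c| = |𝔼 i ∈ s, (g (f i) - g c)| := by
        rw [expect_sub_distrib, expect_const hs]
    _ ≤ 𝔼 i ∈ s, |g (f i) - g c| := abs_expect_le _ _
    _ ≤ 𝔼 i ∈ s, |f i - c| := expect_le_expect fun i _ => by
        simpa [Real.dist_eq] using hg.dist_le_mul (f i) c

end

theorem lipschitzWith_one_max_mul_zero {v : ℝ} (hv : |v| ≤ 1) :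
    LipschitzWith 1 fun x : ℝ => max (v * x) 0 :=
  LipschitzWith.of_dist_le_mul fun x y => by
    simp only [Real.dist_eq, NNReal.coe_one, one_mul]
    calc |max (v * x) 0 - max (v * y) 0| ≤ |v * x - v * y| := abs_max_sub_max_le_abs _ _ _
      _ = |v| * |x - y| := by rw [← mul_sub, abs_mul]
      _ ≤ |x - y| := mul_le_of_le_one_left (abs_nonneg _) hv

theorem Nat.choose_mul_add_two_mul_add_one (n k : ℕ) :
    n.choose k * ((n + 2) * (n + 1)) = (n + 2).choose (k + 1) * ((k + 1) * (n + 1 - k)) := by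
  have h₁ := Nat.add_one_mul_choose_eq n k
  have h₂ := Nat.choose_mul_succ_eq (n + 1) (k + 1)
  rw [show n + 1 + 1 - (k + 1) = n + 1 - k by omega] at h₂
  calc n.choose k * ((n + 2) * (n + 1)) = (n + 1) * n.choose k * (n + 2) := by ring
    _ = (n + 1).choose (k + 1) * (n + 1 + 1) * (k + 1) := by rw [h₁]; ring
    _ = _ := by rw [h₂]; ring

section

variable {ι R : Type*} [DecidableEq ι]

theorem sum_sum_mul_sum_sdiff [CommSemiring R] {U : Finset ι} {𝒜 : Finset (Finset ι)}
    (h𝒜 : ∀ S ∈ 𝒜, S ⊆ U) (f g : ι → R) :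
    ∑ S ∈ 𝒜, (∑ i ∈ S, f i) * ∑ j ∈ U \ S, g j
      = ∑ i ∈ U, ∑ j ∈ U, (#{S ∈ 𝒜 | i ∈ S ∧ j ∉ S} : R) * (f i * g j) := by
  have hexpand : ∀ S ∈ 𝒜, (∑ i ∈ S, f i) * ∑ j ∈ U \ S, g j
      = ∑ i ∈ U, ∑ j ∈ U, if i ∈ S ∧ j ∉ S then f i * g j else 0 := by
    intro S hS
    have hS : ∑ i ∈ S, f i = ∑ i ∈ U, if i ∈ S then f i else 0 := by
      rw [sum_ite_mem, inter_eq_right.2 (h𝒜 S hS)]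
    rw [hS, sdiff_eq_filter, sum_filter, sum_mul_sum]
    simp only [ite_zero_mul_ite_zero]
  rw [sum_congr rfl hexpand, sum_comm]
  refine sum_congr rfl fun i _ => ?_
  rw [sum_comm]
  refine sum_congr rfl fun j _ => ?_
  rw [← sum_filter, sum_const, nsmul_eq_mul]

theorem card_filter_powersetCard_mem_notMem {U : Finset ι} {i j : ι} (hi : i ∈ U) (hj : j ∈ U)
    (hij : i ≠ j) {m : ℕ} (hm : 1 ≤ m) :
    #{S ∈ U.powersetCard m | i ∈ S ∧ j ∉ S} = (#U - 2).choose (m - 1) := by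
  have hfilter : {S ∈ U.powersetCard m | i ∈ S ∧ j ∉ S}
      = {S ∈ (U.erase j).powersetCard m | {i} ⊆ S} := by
    ext S
    simp only [mem_filter, mem_powersetCard, subset_erase, singleton_subset_iff]
    tauto
  rw [hfilter, card_filter_powersetCard_subset _ _ _ (by simpa using mem_erase.2 ⟨hij, hi⟩)
    (by simpa using hm), card_erase_of_mem hj, card_singleton, Nat.sub_sub]

theorem sum_powersetCard_sq_sum_of_sum_eq_zero [CommRing R] {U : Finset ι} {m : ℕ} (hm : 1 ≤ m)
    {b : ι → R} (hb : ∑ i ∈ U, b i = 0) :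
    ∑ S ∈ U.powersetCard m, (∑ i ∈ S, b i) ^ 2
      = ((#U - 2).choose (m - 1) : R) * ∑ i ∈ U, b i ^ 2 := by
  set c : R := ((#U - 2).choose (m - 1) : R)
  have hsq : ∀ S ∈ U.powersetCard m,
      (∑ i ∈ S, b i) ^ 2 = -((∑ i ∈ S, b i) * ∑ j ∈ U \ S, b j) := fun S hS => by
    rw [eq_neg_of_add_eq_zero_left ((sum_sdiff (mem_powersetCard.1 hS).1).trans hb)]
    ring
  have hrow : ∀ i ∈ U, ∑ j ∈ U, (#{S ∈ U.powersetCard m | i ∈ S ∧ j ∉ S} : R) * (b i * b j)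
      = -(c * b i ^ 2) := by
    intro i hi
    have hoff : ∀ j ∈ U.erase i,
        (#{S ∈ U.powersetCard m | i ∈ S ∧ j ∉ S} : R) * (b i * b j) = c * b i * b j :=
      fun j hj => by
        rw [card_filter_powersetCard_mem_notMem hi (mem_of_mem_erase hj) (ne_of_mem_erase hj).symm
          hm, mul_assoc]
    have hrest : ∑ j ∈ U.erase i, b j = -b i :=
      eq_neg_of_add_eq_zero_right ((add_sum_erase U b hi).trans hb)
    rw [← sum_erase U (f := fun j => (#{S ∈ U.powersetCard m | i ∈ S ∧ j ∉ S} : R) * (b i * b j))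
      (a := i) (by simp), sum_congr rfl hoff, ← mul_sum, hrest]
    ring
  rw [sum_congr rfl hsq, sum_neg_distrib,
    sum_sum_mul_sum_sdiff (fun S hS => (mem_powersetCard.1 hS).1), sum_congr rfl hrow,
    sum_neg_distrib, neg_neg, mul_sum]

theorem expect_powersetCard_sq_sampleMean_sub_mean {U : Finset ι} {n m : ℕ} (hU : #U = n)
    (hn : 2 ≤ n) (hm : 1 ≤ m) (hmn : m ≤ n) (a : ι → ℝ) :
    𝔼 S ∈ U.powersetCard m, ((m : ℝ)⁻¹ * ∑ j ∈ S, a j - (n : ℝ)⁻¹ * ∑ j ∈ U, a j) ^ 2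
      = ((n : ℝ) - m) / (n * m) * (1 / ((n : ℝ) - 1)) *
          ∑ j ∈ U, (a j - (n : ℝ)⁻¹ * ∑ k ∈ U, a k) ^ 2 := by
  set abar := (n : ℝ)⁻¹ * ∑ j ∈ U, a j with habar
  have hn₀ : (n : ℝ) ≠ 0 := by positivity
  have hcentered : ∑ j ∈ U, (a j - abar) = 0 := by
    rw [sum_sub_distrib, sum_const, hU, nsmul_eq_mul, habar, mul_inv_cancel_left₀ hn₀, sub_self]
  have hsample : ∀ S ∈ U.powersetCard m,
      ((m : ℝ)⁻¹ * ∑ j ∈ S, a j - abar) ^ 2 = (m : ℝ)⁻¹ ^ 2 * (∑ j ∈ S, (a j - abar)) ^ 2 := by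
    intro S hS
    rw [sum_sub_distrib, sum_const, (mem_powersetCard.1 hS).2, nsmul_eq_mul, ← mul_pow]
    field_simp
  rw [expect_congr rfl hsample, expect_eq_sum_div_card, ← mul_sum,
    sum_powersetCard_sq_sum_of_sum_eq_zero hm hcentered, card_powersetCard, hU]
  obtain ⟨n, rfl⟩ : ∃ n', n = n' + 2 := ⟨n - 2, by omega⟩
  obtain ⟨k, rfl⟩ : ∃ k, m = k + 1 := ⟨m - 1, by omega⟩
  have hchoose := congrArg (Nat.cast : ℕ → ℝ) (Nat.choose_mul_add_two_mul_add_one n k)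
  push_cast [Nat.cast_sub (by omega : k ≤ n + 1)] at hchoose
  simp only [Nat.add_sub_cancel]
  have hchoose₀ : ((n + 2).choose (k + 1) : ℝ) ≠ 0 := by
    exact_mod_cast (Nat.choose_pos (by omega)).ne'
  push_cast
  rw [show (n : ℝ) + 2 - 1 = n + 1 by ring]
  field_simp
  linear_combination (∑ j ∈ U, (a j - abar) ^ 2) * hchoose

end

/-- The normalized sub-sampled switching rate differs from the canonical rate by at most
the mean absolute deviation of the SRSWOR mean estimator, which is in turn bounded by its
standard error:
`|(1/C(n,m)) Σ_{|S|=m} (v·m⁻¹Σ_{j∈S}a_j)₊ − (v·ā)₊| ≤ (1/C(n,m)) Σ_{|S|=m} |m⁻¹Σ_{j∈S}a_j − ā|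
  ≤ sqrt( ((n−m)/(n·m)) · (1/(n−1)) · Σ_j (a_j − ā)² )`. -/
theorem subsampled_rate_close_to_canonical (n m : ℕ) (hn : 2 ≤ n) (hm : 1 ≤ m)
    (hmn : m ≤ n) (a : ℕ → ℝ) (v : ℝ) (hv : v = 1 ∨ v = -1) :
    |(1 / (n.choose m : ℝ)) *
          (∑ S ∈ Finset.powersetCard m (Finset.range n),
            max (v * ((m : ℝ)⁻¹ * ∑ j ∈ S, a j)) 0)
        - max (v * ((n : ℝ)⁻¹ * ∑ j ∈ Finset.range n, a j)) 0|
      ≤ (1 / (n.choose m : ℝ)) *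
          ∑ S ∈ Finset.powersetCard m (Finset.range n),
            |(m : ℝ)⁻¹ * ∑ j ∈ S, a j - (n : ℝ)⁻¹ * ∑ j ∈ Finset.range n, a j| ∧
    (1 / (n.choose m : ℝ)) *
        (∑ S ∈ Finset.powersetCard m (Finset.range n),
          |(m : ℝ)⁻¹ * ∑ j ∈ S, a j - (n : ℝ)⁻¹ * ∑ j ∈ Finset.range n, a j|)
      ≤ Real.sqrt
          (((n : ℝ) - (m : ℝ)) / ((n : ℝ) * (m : ℝ)) * (1 / ((n : ℝ) - 1)) *
            ∑ j ∈ Finset.range n,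
              (a j - (n : ℝ)⁻¹ * ∑ k ∈ Finset.range n, a k) ^ 2) := by
  have haverage : ∀ F : Finset ℕ → ℝ, 1 / (n.choose m : ℝ) * ∑ S ∈ powersetCard m (range n), F S
      = 𝔼 S ∈ powersetCard m (range n), F S := fun F => by
    rw [expect_eq_sum_div_card, card_powersetCard, card_range, one_div_mul_eq_div]
  simp only [haverage]
  have hv₁ : |v| ≤ 1 := by rcases hv with rfl | rfl <;> norm_num
  refine ⟨(lipschitzWith_one_max_mul_zero hv₁).abs_expect_comp_sub_le
    (powersetCard_nonempty.2 (by simpa using hmn)) _ _, ?_⟩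
  rw [← expect_powersetCard_sq_sampleMean_sub_mean (card_range n) hn hm hmn]
  exact expect_abs_le_sqrt_expect_sq _ _
end

section
/- Let n, m be natural numbers with 1 ≤ m ≤ n, let a_1, …, a_n and b_1, …, b_n be real numbers, let v ∈ {−1, +1}, and let λ_a(v) and λ_b(v) denote the Zig-Zag sub-sampling rates built from (a_j) and (b_j) respectively, i.e. λ_a(v) = (n / C(n,m)) Σ_{S ⊆ {1,…,n}, |S| = m} (v · m^{-1} Σ_{j∈S} a_j)_+. Then | λ_a(v) − λ_b(v) | ≤ Σ_{j=1}^{n} | a_j − b_j |. In particular, taking a_j = E^j_i(y) and b_j = E^j_i(x) for either the vanilla sub-sampling or the control-variate decomposition, | λ^n_i(y,v) − λ^n_i(x,v) | ≤ Σ_{j=1}^n | s^j_i(y) − s^j_i(x) |. -/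
open Finset

/-!
Each batch term `(v · m⁻¹ Σ_{j ∈ S} a_j)₊` is `m⁻¹`-Lipschitz in the `ℓ¹` norm of `(a_j)_{j ∈ S}`,
because `t ↦ (v t)₊` is `1`-Lipschitz when `|v| = 1`. Summing over the batches, double counting
shows that each index lies in `C(n-1, m-1)` of them, and `n C(n-1, m-1) = m C(n, m)` makes the
prefactor `n / C(n, m)` cancel exactly.
-/

section DoubleCounting

variable {α : Type*} [DecidableEq α]

theorem card_mul_card_filter_mem_powersetCard (s : Finset α) (m : ℕ) {j : α} (hj : j ∈ s) :
    #s * #{t ∈ s.powersetCard m | j ∈ t} = m * (#s).choose m := by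
  cases m with
  | zero => simp
  | succ k =>
    have hcount : #{t ∈ s.powersetCard (k + 1) | j ∈ t} = (#s - 1).choose k := by
      simpa using card_filter_powersetCard_subset {j} s (k + 1) (singleton_subset_iff.2 hj)
        (by simp)
    obtain ⟨n, hn⟩ : ∃ n, #s = n + 1 := Nat.exists_eq_succ_of_ne_zero (card_ne_zero_of_mem hj)
    rw [hcount, hn, Nat.add_sub_cancel, Nat.add_one_mul_choose_eq, mul_comm]

theorem card_nsmul_sum_powersetCard_sum {M : Type*} [AddCommMonoid M] (s : Finset α) (m : ℕ)
    (f : α → M) :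
    #s • ∑ t ∈ s.powersetCard m, ∑ j ∈ t, f j = (m * (#s).choose m) • ∑ j ∈ s, f j := by
  have hswap : ∑ t ∈ s.powersetCard m, ∑ j ∈ t, f j
      = ∑ j ∈ s, #{t ∈ s.powersetCard m | j ∈ t} • f j := by
    rw [sum_comm' (t' := s) (s' := fun j => {t ∈ s.powersetCard m | j ∈ t})]
    · simp only [sum_const]
    · intro t j
      simp only [mem_powersetCard, mem_filter]
      exact ⟨fun ⟨⟨hts, hcard⟩, hj⟩ => ⟨⟨⟨hts, hcard⟩, hj⟩, hts hj⟩,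
        fun ⟨⟨hts, hj⟩, _⟩ => ⟨hts, hj⟩⟩
  rw [hswap, smul_sum, smul_sum]
  refine sum_congr rfl fun j hj => ?_
  rw [smul_smul, card_mul_card_filter_mem_powersetCard s m hj]

end DoubleCounting

theorem abs_max_mul_sub_max_mul_le {R : Type*} [Ring R] [LinearOrder R] [IsOrderedRing R]
    {v : R} (hv : |v| ≤ 1) (x y : R) :
    |max (v * x) 0 - max (v * y) 0| ≤ |x - y| :=
  calc |max (v * x) 0 - max (v * y) 0| ≤ |v * x - v * y| := abs_max_sub_max_le_abs _ _ _
    _ = |v| * |x - y| := by rw [← mul_sub, abs_mul]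
    _ ≤ |x - y| := mul_le_of_le_one_left (abs_nonneg _) hv

theorem abs_sub_subsamplingRate_le (n m : ℕ) (a b : ℕ → ℝ) {v : ℝ} (hv : |v| ≤ 1) :
    |subsamplingRate n m a v - subsamplingRate n m b v|
      ≤ n / n.choose m * ∑ S ∈ powersetCard m (range n), (m : ℝ)⁻¹ * ∑ j ∈ S, |a j - b j| := by
  rw [subsamplingRate, subsamplingRate, ← mul_sub, ← sum_sub_distrib, abs_mul,
    abs_of_nonneg (by positivity)]
  gcongr
  refine (abs_sum_le_sum_abs _ _).trans (sum_le_sum fun S _ => ?_)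
  calc _ ≤ |(m : ℝ)⁻¹ * ∑ j ∈ S, a j - (m : ℝ)⁻¹ * ∑ j ∈ S, b j| :=
        abs_max_mul_sub_max_mul_le hv _ _
    _ = (m : ℝ)⁻¹ * |∑ j ∈ S, (a j - b j)| := by
        rw [← mul_sub, abs_mul, abs_of_nonneg (by positivity), sum_sub_distrib]
    _ ≤ (m : ℝ)⁻¹ * ∑ j ∈ S, |a j - b j| := by gcongr; exact abs_sum_le_sum_abs _ _

theorem subsamplingRate_lipschitz_general (n m : ℕ)
    (a b : ℕ → ℝ) (v : ℝ) (hv : v = 1 ∨ v = -1) :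
    |subsamplingRate n m a v - subsamplingRate n m b v|
      ≤ ∑ j ∈ Finset.range n, |a j - b j| := by
  have habs : |v| ≤ 1 := by rcases hv with rfl | rfl <;> simp
  have hcount := card_nsmul_sum_powersetCard_sum (range n) m fun j => |a j - b j|
  simp only [card_range, nsmul_eq_mul, Nat.cast_mul] at hcount
  calc _ ≤ n / n.choose m * ∑ S ∈ powersetCard m (range n), (m : ℝ)⁻¹ * ∑ j ∈ S, |a j - b j| :=
        abs_sub_subsamplingRate_le n m a b habs
    _ = ((m : ℝ)⁻¹ * (n.choose m : ℝ)⁻¹) *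
          (n * ∑ S ∈ powersetCard m (range n), ∑ j ∈ S, |a j - b j|) := by
        rw [← mul_sum]; ring
    _ = ((m : ℝ)⁻¹ * m) * ((n.choose m : ℝ)⁻¹ * n.choose m) * ∑ j ∈ range n, |a j - b j| := by
        rw [hcount]; ring
    -- each factor `x⁻¹ * x` is `1`, or `0` when `m = 0` or `n.choose m = 0`
    _ ≤ ∑ j ∈ range n, |a j - b j| :=
        mul_le_of_le_one_left (sum_nonneg fun _ _ => abs_nonneg _)
          (mul_le_one₀ inv_mul_le_one (by positivity) inv_mul_le_one)

/-- Lipschitz bound for sub-sampling rates in terms of the decomposition terms: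
`|λ_a(v) − λ_b(v)| ≤ Σ_j |a_j − b_j|`. -/
theorem subsamplingRate_lipschitz (n m : ℕ) (hm : 1 ≤ m) (hmn : m ≤ n)
    (a b : ℕ → ℝ) (v : ℝ) (hv : v = 1 ∨ v = -1) :
    |subsamplingRate n m a v - subsamplingRate n m b v|
      ≤ ∑ j ∈ Finset.range n, |a j - b j| :=
  subsamplingRate_lipschitz_general n m a b v hv
end

section
/- Let (X_j)_{j ≥ 1} be independent and identically distributed integrable real-valued random variables. Then for all natural numbers m ≤ m′, E| (m′)^{-1} Σ_{j=1}^{m′} X_j | ≤ E| m^{-1} Σ_{j=1}^{m} X_j |. In particular, the asymptotic speed damping factor λ_i(x,−1_d)+λ_i(x,1_d) = E| m^{-1}Σ_{j=1}^m S_i(x;Y_j) | of the sub-sampled Zig-Zag is nonincreasing in the batch size m, so larger subsamples give a larger (faster) asymptotic drift. -/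
/-!
Write `S_s = ∑_{i ∈ s} X_i`. Summing the leave-one-out sums `S_{s \ {k}}` over `k ∈ s` counts
every `X_i` exactly `#s - 1` times, so by the triangle inequality
`(#s - 1) ‖S_s‖ ≤ ∑_{k ∈ s} ‖S_{s \ {k}}‖`. For an i.i.d. family each leave-one-out sum has the
law of a sum of `#s - 1` of the variables, so taking expectations gives
`n E‖S_{n+1}‖ ≤ (n + 1) E‖S_n‖`, i.e. `E‖S_{n+1} / (n + 1)‖ ≤ E‖S_n / n‖`.
-/

open MeasureTheory ProbabilityTheory Finset

lemma Finset.sum_sum_erase {ι G : Type*} [DecidableEq ι] [AddCommGroup G] (s : Finset ι)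
    (f : ι → G) : ∑ k ∈ s, ∑ i ∈ s.erase k, f i = (#s - 1) • ∑ i ∈ s, f i := by
  rcases s.eq_empty_or_nonempty with rfl | hs
  · simp
  rw [sum_congr rfl fun k hk => sum_erase_eq_sub hk, sum_sub_distrib, sum_const,
    sub_nsmul _ hs.card_pos, one_nsmul, sub_eq_add_neg]

lemma Finset.card_sub_one_mul_norm_sum_le {ι E : Type*} [DecidableEq ι]
    [NormedAddCommGroup E] [NormedSpace ℝ E] (s : Finset ι) (f : ι → E) :
    ((#s - 1 : ℕ) : ℝ) * ‖∑ i ∈ s, f i‖ ≤ ∑ k ∈ s, ‖∑ i ∈ s.erase k, f i‖ := by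
  calc ((#s - 1 : ℕ) : ℝ) * ‖∑ i ∈ s, f i‖
      = ‖∑ k ∈ s, ∑ i ∈ s.erase k, f i‖ := by
        rw [sum_sum_erase, RCLike.norm_nsmul ℝ, nsmul_eq_mul]
    _ ≤ ∑ k ∈ s, ‖∑ i ∈ s.erase k, f i‖ := norm_sum_le _ _

namespace ProbabilityTheory

variable {Ω Ω' ι E : Type*} {mΩ : MeasurableSpace Ω} {mΩ' : MeasurableSpace Ω'}
  {μ : Measure Ω} {ν : Measure Ω'} [MeasurableSpace E]

lemma IdentDistrib.add [Add E] [MeasurableAdd₂ E] [IsFiniteMeasure μ] {f g : Ω → E}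
    {f' g' : Ω' → E} (hf : IdentDistrib f f' μ ν) (hg : IdentDistrib g g' μ ν)
    (hfg : f ⟂ᵢ[μ] g) (hfg' : f' ⟂ᵢ[ν] g') : IdentDistrib (f + g) (f' + g') μ ν :=
  (hf.prodMk hg hfg hfg').comp measurable_add

lemma iIndepFun.identDistrib_sum_of_card_eq [AddCommMonoid E] [MeasurableAdd₂ E]
    {X : ι → Ω → E} (hindep : iIndepFun X μ)
    (hident : ∀ i j, IdentDistrib (X i) (X j) μ μ) {s t : Finset ι} (hst : #s = #t) :
    IdentDistrib (∑ i ∈ s, X i) (∑ i ∈ t, X i) μ μ := by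
  classical
  have := hindep.isProbabilityMeasure
  have hmeas i : AEMeasurable (X i) μ := (hident i i).aemeasurable_fst
  induction s using Finset.induction_on generalizing t with
  | empty =>
    rw [card_empty, eq_comm, card_eq_zero] at hst
    subst hst
    exact IdentDistrib.refl aemeasurable_const
  | insert a s ha ih =>
    obtain ⟨b, hb⟩ : t.Nonempty := by
      rw [← card_pos, ← hst, card_insert_of_notMem ha]
      exact s.card.succ_pos
    rw [← insert_erase hb, sum_insert ha, sum_insert (notMem_erase b t), add_comm, add_comm (X b)]
    refine (ih ?_).add (hident a b) (hindep.indepFun_finsetSum_of_notMem₀ hmeas ha)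
      (hindep.indepFun_finsetSum_of_notMem₀ hmeas (notMem_erase b t))
    rw [card_erase_of_mem hb, ← hst, card_insert_of_notMem ha, Nat.add_sub_cancel]

variable [NormedAddCommGroup E] [BorelSpace E] [MeasurableAdd₂ E] {X : ι → Ω → E}

lemma iIndepFun.integral_norm_sum_eq_of_card_eq (hindep : iIndepFun X μ)
    (hident : ∀ i j, IdentDistrib (X i) (X j) μ μ) {s t : Finset ι} (hst : #s = #t) :
    ∫ ω, ‖∑ i ∈ s, X i ω‖ ∂μ = ∫ ω, ‖∑ i ∈ t, X i ω‖ ∂μ := by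
  simpa only [Function.comp_def, Finset.sum_apply] using
    ((hindep.identDistrib_sum_of_card_eq hident hst).comp measurable_norm).integral_eq

lemma iIndepFun.card_mul_integral_norm_sum_le [NormedSpace ℝ E] (hindep : iIndepFun X μ)
    (hident : ∀ i j, IdentDistrib (X i) (X j) μ μ) (hint : ∀ i, Integrable (X i) μ)
    {s t : Finset ι} (hst : #s = #t + 1) :
    #t * ∫ ω, ‖∑ i ∈ s, X i ω‖ ∂μ ≤ #s * ∫ ω, ‖∑ i ∈ t, X i ω‖ ∂μ := by
  classical
  have hint_sum (u : Finset ι) : Integrable (fun ω => ‖∑ i ∈ u, X i ω‖) μ :=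
    (integrable_finsetSum u fun i _ => hint i).norm
  have hleave_one_out k (hk : k ∈ s) :
      ∫ ω, ‖∑ i ∈ s.erase k, X i ω‖ ∂μ = ∫ ω, ‖∑ i ∈ t, X i ω‖ ∂μ :=
    hindep.integral_norm_sum_eq_of_card_eq hident <| by
      rw [card_erase_of_mem hk, hst, Nat.add_sub_cancel]
  calc (#t : ℝ) * ∫ ω, ‖∑ i ∈ s, X i ω‖ ∂μ
      = ∫ ω, ((#s - 1 : ℕ) : ℝ) * ‖∑ i ∈ s, X i ω‖ ∂μ := by
        rw [integral_const_mul, hst, Nat.add_sub_cancel]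
    _ ≤ ∫ ω, ∑ k ∈ s, ‖∑ i ∈ s.erase k, X i ω‖ ∂μ :=
        integral_mono ((hint_sum s).const_mul _)
          (integrable_finsetSum s fun k _ => hint_sum _)
          fun ω => card_sub_one_mul_norm_sum_le s (X · ω)
    _ = #s * ∫ ω, ‖∑ i ∈ t, X i ω‖ ∂μ := by
        rw [integral_finsetSum s fun k _ => hint_sum _, sum_congr rfl hleave_one_out,
          sum_const, nsmul_eq_mul]

lemma iIndepFun.antitoneOn_integral_norm_mean [NormedSpace ℝ E] (hindep : iIndepFun X μ)
    (hident : ∀ i j, IdentDistrib (X i) (X j) μ μ) (hint : ∀ i, Integrable (X i) μ)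
    (t : ℕ → Finset ι) (ht : ∀ n, #(t n) = n) :
    AntitoneOn (fun n : ℕ => (n : ℝ)⁻¹ * ∫ ω, ‖∑ i ∈ t n, X i ω‖ ∂μ) {n | 1 ≤ n} := by
  refine antitoneOn_nat_Ici_of_succ_le fun n hn => ?_
  have hstep := hindep.card_mul_integral_norm_sum_le hident hint
    (s := t (n + 1)) (t := t n) (by rw [ht, ht])
  rw [ht, ht, Nat.cast_succ] at hstep
  have hn_pos : (0 : ℝ) < n := by exact_mod_cast hn
  rw [← div_eq_inv_mul, ← div_eq_inv_mul, div_le_div_iff₀ (by positivity) hn_pos, Nat.cast_succ]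
  linarith

end ProbabilityTheory

theorem batch_mean_abs_antitone_general
    {Ω : Type*} [MeasurableSpace Ω] (μ : Measure Ω)
    (X : ℕ → Ω → ℝ)
    (hindep : iIndepFun X μ)
    (hident : ∀ j, IdentDistrib (X j) (X 1) μ μ)
    (hint : Integrable (X 1) μ)
    (m m' : ℕ) (hm : 1 ≤ m) (hmm' : m ≤ m') :
    (∫ ω, |(m' : ℝ)⁻¹ * ∑ j ∈ Finset.Icc 1 m', X j ω| ∂μ)
      ≤ ∫ ω, |(m : ℝ)⁻¹ * ∑ j ∈ Finset.Icc 1 m, X j ω| ∂μ := by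
  have hident' i j : IdentDistrib (X i) (X j) μ μ := (hident i).trans (hident j).symm
  have hint' i : Integrable (X i) μ := (hident i).symm.integrable_snd hint
  have hmean (n : ℕ) : ∫ ω, |(n : ℝ)⁻¹ * ∑ j ∈ Icc 1 n, X j ω| ∂μ
      = (n : ℝ)⁻¹ * ∫ ω, ‖∑ j ∈ Icc 1 n, X j ω‖ ∂μ := by
    simp only [abs_mul, abs_inv, Nat.abs_cast, integral_const_mul, Real.norm_eq_abs]
  rw [hmean, hmean]
  exact hindep.antitoneOn_integral_norm_mean hident' hint' (Icc 1 ·) (by simp) hm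
    (hm.trans hmm') hmm'

/-- For an i.i.d. integrable sequence `(X_j)` and batch sizes `1 ≤ m ≤ m′`:
`E| (m′)⁻¹ Σ_{j=1}^{m′} X_j | ≤ E| m⁻¹ Σ_{j=1}^{m} X_j |`; i.e. the asymptotic
damping factor of sub-sampled Zig-Zag is nonincreasing in the batch size. -/
theorem batch_mean_abs_antitone
    {Ω : Type*} [MeasurableSpace Ω] (μ : Measure Ω) [IsProbabilityMeasure μ]
    (X : ℕ → Ω → ℝ)
    (hmeas : ∀ j, Measurable (X j))
    (hindep : iIndepFun X μ)
    (hident : ∀ j, IdentDistrib (X j) (X 1) μ μ)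
    (hint : Integrable (X 1) μ)
    (m m' : ℕ) (hm : 1 ≤ m) (hmm' : m ≤ m') :
    (∫ ω, |(m' : ℝ)⁻¹ * ∑ j ∈ Finset.Icc 1 m', X j ω| ∂μ)
      ≤ ∫ ω, |(m : ℝ)⁻¹ * ∑ j ∈ Finset.Icc 1 m, X j ω| ∂μ :=
  batch_mean_abs_antitone_general μ X hindep hident hint m m' hm hmm'
end

section
/- (Rescaled ZZ-CV rate: quantitative linearization.) Let n ≥ 1, 1 ≤ m ≤ n, M′ > 0, and let s¹, …, sⁿ : ℝ^d → ℝ be twice continuously differentiable with ‖∇²s^j(z)‖ ≤ M′ (operator norm) for all z ∈ ℝ^d and all j, and suppose Σ_{j=1}^n s^j(x̂) = 0 for a point x̂ ∈ ℝ^d. For ξ, ξ* ∈ ℝ^d define E^j(ξ) = s^j(x̂ + n^{−1/2}ξ) − s^j(x̂ + n^{−1/2}ξ*) + n^{−1} Σ_{k=1}^n s^k(x̂ + n^{−1/2}ξ*) and F^j(ξ) = ξ·∇s^j(x̂) − ξ*·( ∇s^j(x̂) − n^{−1} Σ_{k=1}^n ∇s^k(x̂) ). Then for every j, | n^{1/2}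 E^j(ξ) − F^j(ξ) | ≤ n^{−1/2} M′ ( ‖ξ‖²/2 + ‖ξ*‖² ), and consequently for every v ∈ {−1,+1}, | n^{−1/2} (n / C(n,m)) Σ_{|S|=m} ( v · m^{−1} Σ_{j∈S} E^j(ξ) )_+ − (1 / C(n,m)) Σ_{|S|=m} ( v · m^{−1} Σ_{j∈S} F^j(ξ) )_+ | ≤ n^{−1/2} M′ ( ‖ξ‖²/2 + ‖ξ*‖² ). -/
/-!
Write `R_j(h) = s^j(x̂ + h) − s^j(x̂) − ∇s^j(x̂)·h` for the Taylor remainder, so that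
`|R_j(h)| ≤ M′‖h‖²/2` by the Hessian bound. Because `Σ_k s^k(x̂) = 0`, the zeroth-order terms
cancel and `n^{1/2}E^j(ξ) − F^j(ξ) = n^{1/2}(R_j(n^{−1/2}ξ) − R_j(n^{−1/2}ξ*) + n^{−1}Σ_k R_k(n^{−1/2}ξ*))`,
each remainder being at most `M′‖·‖²/(2n)`. The rescaled ZZ-CV rate is the linearized rate evaluated
at `n^{1/2}E`, and the subsampled rate is an average of the 1-Lipschitz maps
`G ↦ (v · m^{−1}Σ_{j∈S} G_j)_+`, so it inherits the uniform bound.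
-/

open Finset Set

section Taylor

variable {E F : Type*} [NormedAddCommGroup E] [NormedSpace ℝ E]
  [NormedAddCommGroup F] [NormedSpace ℝ F]

theorem norm_fderiv_fderiv_eq_norm_iteratedFDeriv_two (f : E → F) (z : E) :
    ‖fderiv ℝ (fderiv ℝ f) z‖ = ‖iteratedFDeriv ℝ 2 f z‖ := by
  rw [← norm_iteratedFDeriv_fderiv, ← norm_iteratedFDeriv_fderiv, norm_iteratedFDeriv_zero]

theorem norm_fderiv_sub_fderiv_le_of_norm_iteratedFDeriv_two_le {f : E → F} {M : ℝ}
    (hf : ContDiff ℝ 2 f) (hM : ∀ z, ‖iteratedFDeriv ℝ 2 f z‖ ≤ M) (z w : E) :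
    ‖fderiv ℝ f z - fderiv ℝ f w‖ ≤ M * ‖z - w‖ :=
  Convex.norm_image_sub_le_of_norm_fderiv_le
    (fun _ _ => ((hf.fderiv_right le_rfl).differentiable one_ne_zero).differentiableAt)
    (fun x _ => (norm_fderiv_fderiv_eq_norm_iteratedFDeriv_two f x).trans_le (hM x))
    convex_univ (mem_univ w) (mem_univ z)

noncomputable def taylorRemainder (f : E → F) (x h : E) : F :=
  f (x + h) - f x - fderiv ℝ f x h

theorem norm_taylorRemainder_le {f : E → F} {M : ℝ} (hf : ContDiff ℝ 2 f)
    (hM : ∀ z, ‖iteratedFDeriv ℝ 2 f z‖ ≤ M) (x h : E) :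
    ‖taylorRemainder f x h‖ ≤ M / 2 * ‖h‖ ^ 2 := by
  set φ : ℝ → F := fun t => f (x + t • h) - f x - t • fderiv ℝ f x h
  have hφ : ∀ t : ℝ, HasDerivAt φ (fderiv ℝ f (x + t • h) h - fderiv ℝ f x h) t := by
    intro t
    have hline : HasDerivAt (fun t : ℝ => x + t • h) h t := by
      simpa using ((hasDerivAt_id t).smul_const h).const_add x
    have hcomp := ((hf.differentiable two_ne_zero) (x + t • h)).hasFDerivAt.comp_hasDerivAt t hline
    have hlin : HasDerivAt (fun t : ℝ => t • fderiv ℝ f x h) (fderiv ℝ f x h) t := by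
      simpa using (hasDerivAt_id t).smul_const (fderiv ℝ f x h)
    exact (hcomp.sub_const (f x)).sub hlin
  have hB : ∀ t : ℝ, HasDerivAt (fun t : ℝ => M / 2 * ‖h‖ ^ 2 * t ^ 2) (M * ‖h‖ ^ 2 * t) t := by
    intro t
    refine ((hasDerivAt_pow 2 t).const_mul (M / 2 * ‖h‖ ^ 2)).congr_deriv ?_
    push_cast
    ring
  have hφ' : ∀ t ∈ Ico (0 : ℝ) 1,
      ‖fderiv ℝ f (x + t • h) h - fderiv ℝ f x h‖ ≤ M * ‖h‖ ^ 2 * t := by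
    rintro t ⟨ht, -⟩
    calc ‖fderiv ℝ f (x + t • h) h - fderiv ℝ f x h‖
        = ‖(fderiv ℝ f (x + t • h) - fderiv ℝ f x) h‖ := rfl
      _ ≤ ‖fderiv ℝ f (x + t • h) - fderiv ℝ f x‖ * ‖h‖ := ContinuousLinearMap.le_opNorm _ h
      _ ≤ M * ‖x + t • h - x‖ * ‖h‖ := by
          gcongr; exact norm_fderiv_sub_fderiv_le_of_norm_iteratedFDeriv_two_le hf hM _ _
      _ = M * ‖h‖ ^ 2 * t := by
          rw [add_sub_cancel_left, norm_smul, Real.norm_of_nonneg ht]; ring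
  have hφ1 := image_norm_le_of_norm_deriv_right_le_deriv_boundary
    (fun t _ => (hφ t).continuousAt.continuousWithinAt) (fun t _ => (hφ t).hasDerivWithinAt)
    (by simp [φ]) hB hφ' (right_mem_Icc.2 zero_le_one)
  simpa [φ, taylorRemainder] using hφ1

end Taylor

section ControlVariate

variable {E : Type*} [NormedAddCommGroup E] [NormedSpace ℝ E]

/-- `E^j(ζ)` with reference point `ξstar`, in the coordinate rescaled by `√n` around `x`. -/
noncomputable def controlVariateTerm (s : ℕ → E → ℝ) (x : E) (n : ℕ) (ξstar : E) (j : ℕ)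
    (ζ : E) : ℝ :=
  s j (x + (√(n : ℝ))⁻¹ • ζ) - s j (x + (√(n : ℝ))⁻¹ • ξstar)
    + (n : ℝ)⁻¹ * ∑ k ∈ range n, s k (x + (√(n : ℝ))⁻¹ • ξstar)

/-- `F^j(ζ)`, the linearization of `√n · E^j(ζ)`. -/
noncomputable def controlVariateLinearization (s : ℕ → E → ℝ) (x : E) (n : ℕ) (ξstar : E)
    (j : ℕ) (ζ : E) : ℝ :=
  fderiv ℝ (s j) x ζ - (fderiv ℝ (s j) x ξstar - (n : ℝ)⁻¹ * ∑ k ∈ range n, fderiv ℝ (s k) x ξstar)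

variable {s : ℕ → E → ℝ} {x : E} {n : ℕ}

theorem sqrt_mul_controlVariateTerm_sub_linearization (hn : n ≠ 0)
    (hroot : ∑ k ∈ range n, s k x = 0) (ξstar : E) (j : ℕ) (ζ : E) :
    √(n : ℝ) * controlVariateTerm s x n ξstar j ζ - controlVariateLinearization s x n ξstar j ζ
      = √(n : ℝ) * (taylorRemainder (s j) x ((√(n : ℝ))⁻¹ • ζ)
          - taylorRemainder (s j) x ((√(n : ℝ))⁻¹ • ξstar)
          + (n : ℝ)⁻¹ * ∑ k ∈ range n, taylorRemainder (s k) x ((√(n : ℝ))⁻¹ • ξstar)) := by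
  have hsqrt : √(n : ℝ) ≠ 0 := by positivity
  simp only [controlVariateTerm, controlVariateLinearization, taylorRemainder, map_smul,
    smul_eq_mul, sum_sub_distrib, hroot, ← mul_sum]
  field_simp
  ring

theorem abs_sqrt_mul_controlVariateTerm_sub_linearization_le {M : ℝ}
    (hs : ∀ k ∈ range n, ContDiff ℝ 2 (s k))
    (hM : ∀ k ∈ range n, ∀ z, ‖iteratedFDeriv ℝ 2 (s k) z‖ ≤ M)
    (hroot : ∑ k ∈ range n, s k x = 0) (ξstar : E) {j : ℕ} (hj : j ∈ range n) (ζ : E) :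
    |√(n : ℝ) * controlVariateTerm s x n ξstar j ζ - controlVariateLinearization s x n ξstar j ζ|
      ≤ (√(n : ℝ))⁻¹ * M * (‖ζ‖ ^ 2 / 2 + ‖ξstar‖ ^ 2) := by
  have hn : n ≠ 0 := ne_zero_of_lt (mem_range.1 hj)
  have hsq : √(n : ℝ) ^ 2 = n := Real.sq_sqrt n.cast_nonneg
  have hR : ∀ k ∈ range n, ∀ w : E,
      |taylorRemainder (s k) x ((√(n : ℝ))⁻¹ • w)| ≤ M / 2 * ‖w‖ ^ 2 / n := by
    intro k hk w
    refine (norm_taylorRemainder_le (hs k hk) (hM k hk) x _).trans_eq ?_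
    rw [norm_smul, mul_pow, norm_inv, Real.norm_of_nonneg (Real.sqrt_nonneg _), inv_pow, hsq]
    ring
  have hmean : |(n : ℝ)⁻¹ * ∑ k ∈ range n, taylorRemainder (s k) x ((√(n : ℝ))⁻¹ • ξstar)|
      ≤ M / 2 * ‖ξstar‖ ^ 2 / n := by
    rw [abs_mul, abs_inv, Nat.abs_cast]
    calc (n : ℝ)⁻¹ * |∑ k ∈ range n, taylorRemainder (s k) x ((√(n : ℝ))⁻¹ • ξstar)|
        ≤ (n : ℝ)⁻¹ * (n * (M / 2 * ‖ξstar‖ ^ 2 / n)) := by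
          gcongr
          refine (abs_sum_le_sum_abs _ _).trans ?_
          simpa using sum_le_card_nsmul _ _ _ fun k hk => hR k hk ξstar
      _ = M / 2 * ‖ξstar‖ ^ 2 / n := by field_simp
  rw [sqrt_mul_controlVariateTerm_sub_linearization hn hroot, abs_mul,
    abs_of_nonneg (Real.sqrt_nonneg _)]
  calc √(n : ℝ) * |taylorRemainder (s j) x ((√(n : ℝ))⁻¹ • ζ)
          - taylorRemainder (s j) x ((√(n : ℝ))⁻¹ • ξstar)
          + (n : ℝ)⁻¹ * ∑ k ∈ range n, taylorRemainder (s k) x ((√(n : ℝ))⁻¹ • ξstar)|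
      ≤ √(n : ℝ) * (M / 2 * ‖ζ‖ ^ 2 / n + M / 2 * ‖ξstar‖ ^ 2 / n + M / 2 * ‖ξstar‖ ^ 2 / n) := by
        gcongr
        exact (abs_add_le _ _).trans
          (add_le_add ((abs_sub _ _).trans (add_le_add (hR j hj ζ) (hR j hj ξstar))) hmean)
    _ = (√(n : ℝ))⁻¹ * M * (‖ζ‖ ^ 2 / 2 + ‖ξstar‖ ^ 2) := by
        have hsqrt : √(n : ℝ) ≠ 0 := by positivity
        set r := √(n : ℝ)
        rw [← hsq]
        field_simp
        ring

end ControlVariate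

section SubsampledRate

/-- The ZZ-CV switching rate with batch size `m`, divided by `n`, as a function of the
per-datum terms `G j`. -/
noncomputable def subsampledRate (n m : ℕ) (v : ℝ) (G : ℕ → ℝ) : ℝ :=
  1 / (n.choose m : ℝ) *
    ∑ S ∈ powersetCard m (range n), max (v * ((m : ℝ)⁻¹ * ∑ j ∈ S, G j)) 0

variable {n m : ℕ} {v : ℝ}

theorem subsampledRate_const_mul {c : ℝ} (hc : 0 ≤ c) (G : ℕ → ℝ) :
    subsampledRate n m v (fun j => c * G j) = c * subsampledRate n m v G := by
  rw [subsampledRate, subsampledRate, mul_left_comm c]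
  congr 1
  rw [mul_sum]
  refine sum_congr rfl fun S _ => ?_
  rw [mul_max_of_nonneg _ _ hc, mul_zero, ← mul_sum]
  congr 1
  ring

theorem abs_subsampledRate_sub_le {G H : ℕ → ℝ} {δ : ℝ} (hv : |v| ≤ 1) (hδ : 0 ≤ δ)
    (hGH : ∀ j ∈ range n, |G j - H j| ≤ δ) :
    |subsampledRate n m v G - subsampledRate n m v H| ≤ δ := by
  have hbatch : ∀ S ∈ powersetCard m (range n),
      |max (v * ((m : ℝ)⁻¹ * ∑ j ∈ S, G j)) 0 - max (v * ((m : ℝ)⁻¹ * ∑ j ∈ S, H j)) 0| ≤ δ := by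
    intro S hS
    obtain ⟨hSn, hSm⟩ := mem_powersetCard.1 hS
    have hsum : |∑ j ∈ S, (G j - H j)| ≤ m * δ := by
      refine (abs_sum_le_sum_abs _ _).trans ?_
      simpa [hSm] using sum_le_card_nsmul _ _ _ fun j hj => hGH j (hSn hj)
    calc _ ≤ |v * ((m : ℝ)⁻¹ * ∑ j ∈ S, G j) - v * ((m : ℝ)⁻¹ * ∑ j ∈ S, H j)| :=
          abs_max_sub_max_le_abs _ _ _
      _ = |v| * ((m : ℝ)⁻¹ * |∑ j ∈ S, (G j - H j)|) := by
          rw [← mul_sub, ← mul_sub, ← sum_sub_distrib, abs_mul, abs_mul, abs_inv, Nat.abs_cast]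
      _ ≤ 1 * ((m : ℝ)⁻¹ * (m * δ)) := by gcongr
      _ ≤ δ := by rw [one_mul]; exact inv_mul_left_le hδ
  rw [subsampledRate, subsampledRate, ← mul_sub, ← sum_sub_distrib, abs_mul, one_div, abs_inv,
    Nat.abs_cast]
  calc _ ≤ (n.choose m : ℝ)⁻¹ * (n.choose m * δ) := by
        gcongr
        refine (abs_sum_le_sum_abs _ _).trans ?_
        simpa using sum_le_card_nsmul _ _ _ hbatch
    _ ≤ δ := inv_mul_left_le hδ

end SubsampledRate

theorem zzcv_rescaled_rate_linearization_general
    (d n m : ℕ)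
    (M' : ℝ) (hM' : 0 < M')
    (s : ℕ → EuclideanSpace ℝ (Fin d) → ℝ)
    (hs : ∀ j ∈ Finset.range n, ContDiff ℝ 2 (s j))
    (hhess : ∀ j ∈ Finset.range n, ∀ z, ‖iteratedFDeriv ℝ 2 (s j) z‖ ≤ M')
    (xh : EuclideanSpace ℝ (Fin d)) (hroot : ∑ j ∈ Finset.range n, s j xh = 0)
    (ξ ξstar : EuclideanSpace ℝ (Fin d))
    (E F : ℕ → EuclideanSpace ℝ (Fin d) → ℝ)
    (hE : ∀ j ζ, E j ζ
      = s j (xh + (Real.sqrt n)⁻¹ • ζ) - s j (xh + (Real.sqrt n)⁻¹ • ξstar)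
        + (n : ℝ)⁻¹ * ∑ k ∈ Finset.range n, s k (xh + (Real.sqrt n)⁻¹ • ξstar))
    (hF : ∀ j ζ, F j ζ
      = fderiv ℝ (s j) xh ζ
        - (fderiv ℝ (s j) xh ξstar
            - (n : ℝ)⁻¹ * ∑ k ∈ Finset.range n, fderiv ℝ (s k) xh ξstar)) :
    (∀ j ∈ Finset.range n,
      |Real.sqrt n * E j ξ - F j ξ|
        ≤ (Real.sqrt n)⁻¹ * M' * (‖ξ‖ ^ 2 / 2 + ‖ξstar‖ ^ 2)) ∧
    (∀ v : ℝ, v = 1 ∨ v = -1 →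
      |(Real.sqrt n)⁻¹ *
            ((n : ℝ) / (n.choose m : ℝ) *
              ∑ S ∈ Finset.powersetCard m (Finset.range n),
                max (v * ((m : ℝ)⁻¹ * ∑ j ∈ S, E j ξ)) 0)
          - (1 / (n.choose m : ℝ)) *
              ∑ S ∈ Finset.powersetCard m (Finset.range n),
                max (v * ((m : ℝ)⁻¹ * ∑ j ∈ S, F j ξ)) 0|
        ≤ (Real.sqrt n)⁻¹ * M' * (‖ξ‖ ^ 2 / 2 + ‖ξstar‖ ^ 2)) := by
  obtain rfl : E = controlVariateTerm s xh n ξstar := funext fun j => funext (hE j)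
  obtain rfl : F = controlVariateLinearization s xh n ξstar := funext fun j => funext (hF j)
  have hlin := fun j (hj : j ∈ range n) =>
    abs_sqrt_mul_controlVariateTerm_sub_linearization_le hs hhess hroot ξstar hj ξ
  refine ⟨hlin, fun v hv => ?_⟩
  have hrate : (√(n : ℝ))⁻¹ * ((n : ℝ) / (n.choose m : ℝ) *
        ∑ S ∈ powersetCard m (range n),
          max (v * ((m : ℝ)⁻¹ * ∑ j ∈ S, controlVariateTerm s xh n ξstar j ξ)) 0)
      = subsampledRate n m v fun j => √(n : ℝ) * controlVariateTerm s xh n ξstar j ξ := by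
    rw [subsampledRate_const_mul (Real.sqrt_nonneg _), subsampledRate]
    nth_rw 2 [← Real.div_sqrt]
    ring
  rw [hrate]
  exact abs_subsampledRate_sub_le (by rcases hv with rfl | rfl <;> simp) (by positivity) hlin

/-- Quantitative linearization of the rescaled ZZ-CV switching rate: under a uniform
Hessian bound `‖∇²s^j‖ ≤ M′` and `Σ_j s^j(x̂) = 0`, the control-variate terms `E^j` in
the rescaled coordinate satisfy `|√n·E^j(ξ) − F^j(ξ)| ≤ n^{−1/2} M′(‖ξ‖²/2 + ‖ξ*‖²)`
with `F^j` the first-order Taylor linearization, and consequently the rescaled ZZ-CV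
rate is within the same bound of the linearized rate. -/
theorem zzcv_rescaled_rate_linearization
    (d n m : ℕ) (hn : 1 ≤ n) (hm1 : 1 ≤ m) (hmn : m ≤ n)
    (M' : ℝ) (hM' : 0 < M')
    (s : ℕ → EuclideanSpace ℝ (Fin d) → ℝ)
    (hs : ∀ j ∈ Finset.range n, ContDiff ℝ 2 (s j))
    (hhess : ∀ j ∈ Finset.range n, ∀ z, ‖iteratedFDeriv ℝ 2 (s j) z‖ ≤ M')
    (xh : EuclideanSpace ℝ (Fin d)) (hroot : ∑ j ∈ Finset.range n, s j xh = 0)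
    (ξ ξstar : EuclideanSpace ℝ (Fin d))
    (E F : ℕ → EuclideanSpace ℝ (Fin d) → ℝ)
    (hE : ∀ j ζ, E j ζ
      = s j (xh + (Real.sqrt n)⁻¹ • ζ) - s j (xh + (Real.sqrt n)⁻¹ • ξstar)
        + (n : ℝ)⁻¹ * ∑ k ∈ Finset.range n, s k (xh + (Real.sqrt n)⁻¹ • ξstar))
    (hF : ∀ j ζ, F j ζ
      = fderiv ℝ (s j) xh ζ
        - (fderiv ℝ (s j) xh ξstar
            - (n : ℝ)⁻¹ * ∑ k ∈ Finset.range n, fderiv ℝ (s k) xh ξstar)) :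
    (∀ j ∈ Finset.range n,
      |Real.sqrt n * E j ξ - F j ξ|
        ≤ (Real.sqrt n)⁻¹ * M' * (‖ξ‖ ^ 2 / 2 + ‖ξstar‖ ^ 2)) ∧
    (∀ v : ℝ, v = 1 ∨ v = -1 →
      |(Real.sqrt n)⁻¹ *
            ((n : ℝ) / (n.choose m : ℝ) *
              ∑ S ∈ Finset.powersetCard m (Finset.range n),
                max (v * ((m : ℝ)⁻¹ * ∑ j ∈ S, E j ξ)) 0)
          - (1 / (n.choose m : ℝ)) *
              ∑ S ∈ Finset.powersetCard m (Finset.range n),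
                max (v * ((m : ℝ)⁻¹ * ∑ j ∈ S, F j ξ)) 0|
        ≤ (Real.sqrt n)⁻¹ * M' * (‖ξ‖ ^ 2 / 2 + ‖ξstar‖ ^ 2)) :=
  zzcv_rescaled_rate_linearization_general d n m M' hM' s hs hhess xh hroot ξ ξstar E F hE hF
end
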